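/- Let V be a finite set, R a finite laminar family of subsets of V, and S ⊆ V. If 1 ≤ |R(S)| ≤ |R(V\S)|, then for every R ∈ R(S) we have V \ (R ∪ S) ≠ ∅. -/

import Mathlib

open Finset

/-- A family of sets is laminar if any two members are either disjoint or nested. -/
def LaminarF {V : Type*} (F : Finset (Finset V)) : Prop :=
  ∀ A ∈ F, ∀ B ∈ F, Disjoint A B ∨ A ⊆ B ∨ B ⊆ A

/-- `R(S)`: the members of the family `R` that overlap `S`, i.e. those `A ∈ R` with
`A ∩ S`, `A \ S` and `S \ A` all nonempty. -/
def overlapFam {V : Type*} [DecidableEq V] (R : Finset (Finset V)) (S : Finset V) :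
    Finset (Finset V) :=
  R.filter fun A => (A ∩ S).Nonempty ∧ (A \ S).Nonempty ∧ (S \ A).Nonempty

/-!
If `A ∈ R(S)` covered `V \ S`, then every `B ∈ R(V \ S)` meets `V \ S ⊆ A` without containing
it, so laminarity forces `B ⊊ A`; since `A` misses part of `S`, so does `B`, i.e. `B ∈ R(S)`.
Thus `R(V \ S) ⊆ R(S) \ {A}`, contradicting `|R(S)| ≤ |R(V \ S)|`.
-/

section

variable {V : Type*} [DecidableEq V] {R : Finset (Finset V)} {S A B : Finset V}

theorem mem_overlapFam :
    A ∈ overlapFam R S ↔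
      A ∈ R ∧ (A ∩ S).Nonempty ∧ (A \ S).Nonempty ∧ (S \ A).Nonempty :=
  mem_filter

variable [Fintype V]

theorem ssubset_of_mem_overlapFam_compl (hlam : LaminarF R) (hAR : A ∈ R) (hSA : Sᶜ ⊆ A)
    (hB : B ∈ overlapFam R Sᶜ) : B ⊂ A := by
  obtain ⟨hBR, ⟨x, hx⟩, -, ⟨y, hy⟩⟩ := mem_overlapFam.mp hB
  obtain ⟨hxB, hxS⟩ := mem_inter.mp hx
  obtain ⟨hyS, hyB⟩ := mem_sdiff.mp hy
  have hyA : y ∈ A := hSA hyS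
  refine ssubset_of_subset_of_ne ?_ (by rintro rfl; exact hyB hyA)
  rcases hlam A hAR B hBR with hdisj | hAB | hBA
  · exact absurd hxB (disjoint_left.mp hdisj (hSA hxS))
  · exact absurd (hAB hyA) hyB
  · exact hBA

theorem overlapFam_compl_subset_erase (hlam : LaminarF R) (hA : A ∈ overlapFam R S)
    (hSA : Sᶜ ⊆ A) : overlapFam R Sᶜ ⊆ (overlapFam R S).erase A := by
  intro B hB
  obtain ⟨hAR, -, -, ⟨z, hz⟩⟩ := mem_overlapFam.mp hA
  obtain ⟨hBR, ⟨x, hx⟩, ⟨y, hy⟩, -⟩ := mem_overlapFam.mp hB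
  obtain ⟨hzS, hzA⟩ := mem_sdiff.mp hz
  obtain ⟨hxB, hxS⟩ := mem_inter.mp hx
  obtain ⟨hyB, hyS⟩ := mem_sdiff.mp hy
  have hBA := ssubset_of_mem_overlapFam_compl hlam hAR hSA hB
  refine mem_erase.mpr ⟨hBA.ne, mem_overlapFam.mpr ⟨hBR, ?_, ?_, ?_⟩⟩
  · exact ⟨y, mem_inter.mpr ⟨hyB, notMem_compl.mp hyS⟩⟩
  · exact ⟨x, mem_sdiff.mpr ⟨hxB, mem_compl.mp hxS⟩⟩
  · exact ⟨z, mem_sdiff.mpr ⟨hzS, fun hzB => hzA (hBA.subset hzB)⟩⟩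

theorem card_overlapFam_compl_lt (hlam : LaminarF R) (hA : A ∈ overlapFam R S)
    (hSA : Sᶜ ⊆ A) : (overlapFam R Sᶜ).card < (overlapFam R S).card :=
  calc (overlapFam R Sᶜ).card ≤ ((overlapFam R S).erase A).card :=
        card_le_card (overlapFam_compl_subset_erase hlam hA hSA)
    _ < (overlapFam R S).card := card_erase_lt_of_mem hA

end

theorem overlapped_union_not_all_general
    {V : Type*} [Fintype V] [DecidableEq V]
    (R : Finset (Finset V)) (hlam : LaminarF R) (S : Finset V)
    (h2 : (overlapFam R S).card ≤ (overlapFam R Sᶜ).card) :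
    ∀ A ∈ overlapFam R S, ((A ∪ S)ᶜ).Nonempty := by
  intro A hA
  by_contra hcover
  have hSA : Sᶜ ⊆ A := fun x hx => by
    by_contra hxA
    exact hcover ⟨x, by simp [hx, hxA]⟩
  exact (card_overlapFam_compl_lt hlam hA hSA).not_ge h2

/-- Lemma 3.6: if `1 ≤ |R(S)| ≤ |R(V \ S)|` for a laminar family `R`, then
`V \ (R' ∪ S) ≠ ∅` for every `R' ∈ R(S)`. -/
theorem overlapped_union_not_all
    {V : Type*} [Fintype V] [DecidableEq V]
    (R : Finset (Finset V)) (hlam : LaminarF R) (S : Finset V)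
    (h1 : 1 ≤ (overlapFam R S).card)
    (h2 : (overlapFam R S).card ≤ (overlapFam R Sᶜ).card) :
    ∀ A ∈ overlapFam R S, ((A ∪ S)ᶜ).Nonempty :=
  overlapped_union_not_all_general R hlam S h2
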